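/- For τ ∈ [0,1] define J_τ := ∫_{−1}^{1} z (1 + (2/3) z)² ( (31/19)(1 − z) )^τ e^{(1−τ)( −(31/19) z + 12/19 )} dz. Then there exists τ₀ ∈ (0,1) such that J_{τ₀} = 0. -/

import Mathlib

open Real intervalIntegral

/-- The barycenter integral `J_τ = I_τ^{(2)}(−31/19)` of Example 7.2 for the
KSM-manifold `ℙ(𝒪_{ℙ²}(2) ⊕ 𝒪_{ℙ²})`:
`J_τ = ∫_{−1}^{1} z (1 + (2/3)z)² ((31/19)(1 − z))^τ e^{(1−τ)(−(31/19)z + 12/19)} dz`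
(here `x ^ τ` is the real power). -/
noncomputable def Jτint (τ : ℝ) : ℝ :=
  ∫ z in (-1 : ℝ)..1,
    z * (1 + (2 / 3) * z) ^ (2 : ℕ) * ((31 / 19) * (1 - z)) ^ τ *
      Real.exp ((1 - τ) * (-(31 / 19) * z + 12 / 19))

lemma exp_62_19_lt : Real.exp (62 / 19) < 28 := by
  have h1 : Real.exp (62 / 95) ≤ 62598821 / 32580250 := by
    have h := Real.exp_bound' (x := 62 / 95) (by norm_num) (by norm_num) (n := 4) (by norm_num)
    refine h.trans ?_
    rw [Finset.sum_range_succ, Finset.sum_range_succ, Finset.sum_range_succ,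
      Finset.sum_range_succ, Finset.sum_range_zero]
    norm_num [Nat.factorial]
  have h2 : Real.exp (62 / 19) = Real.exp (62 / 95) ^ (5 : ℕ) := by
    rw [← Real.exp_nat_mul]; norm_num
  rw [h2]
  calc Real.exp (62 / 95) ^ (5 : ℕ) ≤ (62598821 / 32580250 : ℝ) ^ (5 : ℕ) := by
        exact pow_le_pow_left₀ (Real.exp_nonneg _) h1 5
    _ < 28 := by norm_num

lemma J1_val : Jτint 1 = 62 / 855 := by
  have h : Jτint 1 = ∫ z in (-1 : ℝ)..1,
      (31/19*z + 31/57*z^2 - 248/171*z^3 - 124/171*z^4) := by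
    rw [Jτint]
    apply intervalIntegral.integral_congr
    intro z _
    simp only [Real.rpow_one, sub_self, zero_mul, Real.exp_zero, mul_one]
    ring
  rw [h]
  rw [intervalIntegral.integral_eq_sub_of_hasDerivAt
    (f := fun z : ℝ => 31/38*z^2 + 31/171*z^3 - 62/171*z^4 - 124/855*z^5)
    (f' := fun z : ℝ => 31/19*z + 31/57*z^2 - 248/171*z^3 - 124/171*z^4)]
  · norm_num
  · intro z _
    have H := ((((hasDerivAt_pow 2 z).const_mul (31/38:ℝ)).add
        ((hasDerivAt_pow 3 z).const_mul (31/171:ℝ))).sub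
        ((hasDerivAt_pow 4 z).const_mul (62/171:ℝ))).sub
        ((hasDerivAt_pow 5 z).const_mul (124/855:ℝ))
    convert H using 1
    · funext y; simp only [Pi.add_apply, Pi.sub_apply]
    · norm_num; ring
  · apply Continuous.intervalIntegrable
    fun_prop

lemma J0_neg : Jτint 0 < 0 := by
  have h : Jτint 0 = ∫ z in (-1 : ℝ)..1,
      Real.exp (-(31/19)*z + 12/19) * (z + 4/3*z^2 + 4/9*z^3) := by
    rw [Jτint]
    apply intervalIntegral.integral_congr
    intro z _
    simp only [Real.rpow_zero, mul_one, sub_zero, one_mul]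
    ring
  have key : (∫ z in (-1 : ℝ)..1, Real.exp (-(31/19)*z + 12/19) * (z + 4/3*z^2 + 4/9*z^3))
      = Real.exp (-1) * (-43096066/8311689) - Real.exp (43/19) * (-1520912/8311689) := by
    rw [intervalIntegral.integral_eq_sub_of_hasDerivAt
      (f := fun z : ℝ => Real.exp (-(31/19)*z + 12/19) *
        (-76/279*z^3 - 3800/2883*z^2 - 199177/89373*z - 3784363/2770563))
      (f' := fun z : ℝ => Real.exp (-(31/19)*z + 12/19) * (z + 4/3*z^2 + 4/9*z^3))]
    · norm_num
    · intro z _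
      have hexp : HasDerivAt (fun z : ℝ => Real.exp (-(31/19)*z + 12/19))
          (Real.exp (-(31/19)*z + 12/19) * (-(31/19))) z := by
        have : HasDerivAt (fun z : ℝ => -(31/19)*z + 12/19) (-(31/19)) z := by
          simpa using ((hasDerivAt_id z).const_mul (-(31/19) : ℝ)).add_const (12/19 : ℝ)
        simpa using this.exp
      have hpoly := ((((hasDerivAt_pow 3 z).const_mul (-76/279:ℝ)).sub
          ((hasDerivAt_pow 2 z).const_mul (3800/2883:ℝ))).sub
          ((hasDerivAt_id' (x := z)).const_mul (199177/89373:ℝ))).sub_const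
          (3784363/2770563:ℝ)
      convert hexp.mul hpoly using 1
      · rfl
      · funext y; simp only [Pi.mul_apply, Pi.sub_apply]
      · norm_num; ring
    · apply Continuous.intervalIntegrable
      fun_prop
  rw [h, key]
  have e3 : Real.exp (43/19) = Real.exp (62/19) * Real.exp (-1) := by
    rw [← Real.exp_add]; norm_num
  have e1 := exp_62_19_lt
  have e2 := Real.exp_pos (-1 : ℝ)
  nlinarith [e2.le, Real.exp_pos (62/19 : ℝ)]

lemma J_contOn : ContinuousOn Jτint (Set.Icc 0 1) := by
  intro τ₀ hτ₀
  unfold Jτint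
  apply intervalIntegral.continuousWithinAt_of_dominated_interval
    (bound := fun _ => 1 * (25/9) * (62/19) * Real.exp (43/19))
  · apply Filter.Eventually.of_forall
    intro τ
    apply Measurable.aestronglyMeasurable
    fun_prop
  · apply Filter.eventually_of_mem self_mem_nhdsWithin
    intro τ hτ
    apply Filter.Eventually.of_forall
    intro z hz
    rw [Set.uIoc_of_le (by norm_num : (-1:ℝ) ≤ 1)] at hz
    obtain ⟨hz1, hz2⟩ := hz
    obtain ⟨hτ1, hτ2⟩ := hτ
    have hx0 : (0:ℝ) ≤ 31/19 * (1 - z) := by nlinarith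
    have h3 : (0:ℝ) ≤ (1 + 2/3*z)^(2:ℕ) := sq_nonneg _
    have h5 : (0:ℝ) ≤ ((31/19) * (1 - z)) ^ τ := Real.rpow_nonneg hx0 _
    have h1 : |z| ≤ 1 := abs_le.2 ⟨hz1.le, hz2⟩
    have h2 : (1 + 2/3*z)^(2:ℕ) ≤ 25/9 := by nlinarith
    have h4 : ((31/19) * (1 - z)) ^ τ ≤ 62/19 := by
      rcases le_or_gt ((31/19) * (1 - z)) 1 with hle | hgt
      · exact (Real.rpow_le_one hx0 hle hτ1).trans (by norm_num)
      · calc ((31/19) * (1 - z)) ^ τ ≤ ((31/19) * (1 - z)) ^ (1:ℝ) :=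
              Real.rpow_le_rpow_of_exponent_le hgt.le hτ2
          _ = (31/19) * (1 - z) := Real.rpow_one _
          _ ≤ 62/19 := by nlinarith
    have h6 : Real.exp ((1 - τ) * (-(31/19)*z + 12/19)) ≤ Real.exp (43/19) := by
      apply Real.exp_le_exp.2
      nlinarith
    calc ‖z * (1 + 2/3*z)^(2:ℕ) * ((31/19)*(1-z)) ^ τ *
          Real.exp ((1 - τ) * (-(31/19)*z + 12/19))‖
        = |z| * (1 + 2/3*z)^(2:ℕ) * ((31/19)*(1-z)) ^ τ *
          Real.exp ((1 - τ) * (-(31/19)*z + 12/19)) := by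
          rw [Real.norm_eq_abs, abs_mul, abs_mul, abs_mul, abs_of_nonneg h3,
            abs_of_nonneg h5, abs_of_nonneg (Real.exp_pos _).le]
      _ ≤ 1 * (25/9) * (62/19) * Real.exp (43/19) := by
          gcongr
  · exact intervalIntegrable_const
  · have hae : ∀ᵐ z : ℝ, z ≠ 1 := by
      have : (MeasureTheory.volume ({1} : Set ℝ)) = 0 := MeasureTheory.measure_singleton 1
      exact MeasureTheory.compl_mem_ae_iff.2 this
    filter_upwards [hae] with z hzne hz
    rw [Set.uIoc_of_le (by norm_num : (-1:ℝ) ≤ 1)] at hz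
    have hx : (0:ℝ) < 31/19 * (1 - z) := by
      have : z < 1 := lt_of_le_of_ne hz.2 hzne
      nlinarith
    have hc : Continuous fun τ : ℝ => z * (1 + 2/3*z)^(2:ℕ) * ((31/19)*(1-z)) ^ τ *
        Real.exp ((1 - τ) * (-(31/19)*z + 12/19)) := by
      apply Continuous.mul
      · exact continuous_const.mul
          (continuous_iff_continuousAt.2 fun τ => Real.continuousAt_const_rpow hx.ne')
      · exact Real.continuous_exp.comp ((continuous_const.sub continuous_id).mul continuous_const)
    exact hc.continuousWithinAt

/-- Example 7.2. There exists `τ₀ ∈ (0,1)` with `J_{τ₀} = 0`; hence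
`ℙ(𝒪_{ℙ²}(2) ⊕ 𝒪_{ℙ²})` is non-uniformly relative D-stable with respect to
`(σ_{τ₀}, V_{τ₀})`. -/
theorem statement19 : ∃ τ₀ ∈ Set.Ioo (0 : ℝ) 1, Jτint τ₀ = 0 := by
  have h0 : (0:ℝ) ∈ Set.Ioo (Jτint 0) (Jτint 1) := ⟨J0_neg, by rw [J1_val]; norm_num⟩
  obtain ⟨τ₀, hτ₀, hval⟩ := intermediate_value_Ioo (by norm_num : (0:ℝ) ≤ 1) J_contOn h0
  exact ⟨τ₀, hτ₀, hval⟩
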